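/- arXiv:2510.16663 — 9 statements merged into one kernel-verified Lean document; each statement's English description precedes it below -/
import Mathlib

section
/- Let s > 0, T ∈ ℕ, availability rates ρ : Fin T → ℝ with 0 < ρ t ≤ 1 for all t, and staffing levels x : Fin T → ℝ with x t ≥ 0. Then the T constraints x t ≤ (((s·ρ 0 − x 0)·ρ 1 − x 1)···)·ρ t obtained by sequentially depleting supply (i.e., x t ≤ ρ t · (remaining supply at time t)) hold for all t if and only if ∑_{t} x t / (∏_{τ ≤ t} ρ τ) ≤ s together with nonnegativity of each partial remaining supply; in particular, the sequential feasibility constraints imply ∑_{t} (1/∏_{τ≤t} ρ τ) · x t ≤ s. -/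
/-- Sequential supply-depletion feasibility is equivalent to the
single linear constraint `∑ t, x t / ∏_{τ ≤ t} ρ τ ≤ s` together with nonnegativity
of each partial remaining supply. -/
theorem sequential_feasibility_iff_linear
    (T : ℕ) (s : ℝ) (hs : 0 < s)
    (ρ x : Fin T → ℝ)
    (hρ : ∀ t, 0 < ρ t ∧ ρ t ≤ 1)
    (hx : ∀ t, 0 ≤ x t)
    (rem : ℕ → ℝ)
    (hrem0 : rem 0 = s)
    (hrem : ∀ t : Fin T, rem ((t : ℕ) + 1) = ρ t * rem t - x t) :
    (∀ t : Fin T, x t ≤ ρ t * rem t) ↔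
      ((∑ t : Fin T, x t / ∏ τ ∈ Finset.Iic t, ρ τ) ≤ s ∧
        ∀ t : Fin T, 0 ≤ rem ((t : ℕ) + 1)) := by
  -- key closed form for rem
  have key : ∀ n, n ≤ T →
      rem n = (∏ τ ∈ Finset.univ.filter (fun τ : Fin T => (τ : ℕ) < n), ρ τ) *
        (s - ∑ t ∈ Finset.univ.filter (fun t : Fin T => (t : ℕ) < n),
          x t / ∏ τ ∈ Finset.Iic t, ρ τ) := by
    intro n
    induction n with
    | zero =>
      intro _
      have : Finset.univ.filter (fun τ : Fin T => (τ : ℕ) < 0) = ∅ := by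
        ext τ; simp
      simp [this, hrem0]
    | succ n ih =>
      intro hn1
      have hn : n < T := hn1
      have ihn := ih (le_of_lt hn)
      set t0 : Fin T := ⟨n, hn⟩ with ht0
      have hset : Finset.univ.filter (fun τ : Fin T => (τ : ℕ) < n + 1)
          = insert t0 (Finset.univ.filter (fun τ : Fin T => (τ : ℕ) < n)) := by
        ext τ
        simp only [Finset.mem_filter, Finset.mem_univ, true_and, Finset.mem_insert,
          Fin.ext_iff, ht0]
        omega
      have hnot : t0 ∉ Finset.univ.filter (fun τ : Fin T => (τ : ℕ) < n) := by
        simp [ht0]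
      have hIic : Finset.Iic t0 = Finset.univ.filter (fun τ : Fin T => (τ : ℕ) < n + 1) := by
        ext τ
        simp only [Finset.mem_Iic, Finset.mem_filter, Finset.mem_univ, true_and,
          Fin.le_def, ht0]
        omega
      have hPpos : 0 < ∏ τ ∈ Finset.univ.filter (fun τ : Fin T => (τ : ℕ) < n), ρ τ :=
        Finset.prod_pos fun τ _ => (hρ τ).1
      have hrpos : 0 < ρ t0 := (hρ t0).1
      have : rem (n + 1) = ρ t0 * rem n - x t0 := hrem t0
      rw [this, ihn, hset, Finset.prod_insert hnot, Finset.sum_insert hnot, hIic, hset,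
        Finset.prod_insert hnot]
      field_simp
      ring
  constructor
  · intro h
    have hnn : ∀ t : Fin T, 0 ≤ rem ((t : ℕ) + 1) := by
      intro t
      rw [hrem t]
      linarith [h t]
    refine ⟨?_, hnn⟩
    rcases Nat.eq_zero_or_pos T with hT | hT
    · subst hT; simp; exact hs.le
    · have hTle : T - 1 + 1 = T := Nat.succ_pred_eq_of_pos hT
      have := hnn ⟨T - 1, Nat.sub_lt hT one_pos⟩
      simp only at this
      rw [hTle] at this
      have hkey := key T le_rfl
      have hfull : Finset.univ.filter (fun τ : Fin T => (τ : ℕ) < T) = Finset.univ := by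
        ext τ; simp [τ.isLt]
      rw [hkey, hfull] at this
      have hPpos : 0 < ∏ τ ∈ (Finset.univ : Finset (Fin T)), ρ τ :=
        Finset.prod_pos fun τ _ => (hρ τ).1
      nlinarith [this]
  · rintro ⟨-, hnn⟩ t
    have := hnn t
    rw [hrem t] at this
    linarith
end

section
/- Let x, x† : Fin T → ℝ≥0 be two staffing profiles with ∑_{τ≤t} x_τ ≤ ∑_{τ≤t} x†_τ for all t < T−1 and ∑_{τ<T} x_τ = ∑_{τ<T} x†_τ. If x is supply-feasible with respect to initial supply s and availability rates ρ (i.e., ∑_t x_t/ρ_t ≤ s with ρ nonincreasing and positive), then x† is also supply-feasible; moreover for every demand d the understaffing cost c·(d − ∑_t x†_t)^+ equals c·(d − ∑_t x_t)^+. -/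
lemma sum_Iic_fin {T : ℕ} (f : Fin T → ℝ) (t : Fin T) :
    ∑ τ ∈ Finset.Iic t, f τ
      = ∑ j ∈ Finset.range (t.val + 1), (if h : j < T then f ⟨j, h⟩ else 0) := by
  refine Finset.sum_nbij' (fun τ => τ.val) (fun j => if h : j < T then ⟨j, h⟩ else t) ?_ ?_ ?_ ?_ ?_
  · intro a ha
    simp only [Finset.mem_Iic] at ha
    simpa [Finset.mem_range, Nat.lt_succ_iff] using ha
  · intro j hj
    simp only [Finset.mem_range, Nat.lt_succ_iff] at hj
    have hjT : j < T := lt_of_le_of_lt hj t.isLt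
    simp [hjT, Finset.mem_Iic, Fin.le_def, hj]
  · intro a ha
    simp [a.isLt]
  · intro j hj
    simp only [Finset.mem_range, Nat.lt_succ_iff] at hj
    have hjT : j < T := lt_of_le_of_lt hj t.isLt
    simp [hjT]
  · intro a ha
    simp [a.isLt]


lemma sum_range_dite {T : ℕ} (f : Fin T → ℝ) :
    ∑ i ∈ Finset.range T, (if h : i < T then f ⟨i, h⟩ else 0) = ∑ t : Fin T, f t := by
  rw [← Fin.sum_univ_eq_sum_range (fun i => if h : i < T then f ⟨i, h⟩ else 0) T]
  exact Finset.sum_congr rfl fun i _ => by simp [i.isLt]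

/-- Observation (ii). If `x†` hires the same total as `x` but
earlier (partial-sum domination), `ρ` is positive and weakly decreasing, and `x`
is supply-feasible (`∑ t, x t / ρ t ≤ s`), then `x†` is also supply-feasible, and
for any demand `d` the understaffing costs of the two profiles coincide. -/
theorem hiring_earlier_preserves_feasibility
    (T : ℕ) (s c d : ℝ) (hc : 0 ≤ c)
    (ρ x x' : Fin T → ℝ)
    (hρpos : ∀ t, 0 < ρ t) (hρmono : Antitone ρ)
    (hx : ∀ t, 0 ≤ x t) (hx' : ∀ t, 0 ≤ x' t)
    (hdom : ∀ t : Fin T, ∑ τ ∈ Finset.Iic t, x τ ≤ ∑ τ ∈ Finset.Iic t, x' τ)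
    (heq : ∑ t : Fin T, x t = ∑ t : Fin T, x' t)
    (hfeas : ∑ t : Fin T, x t / ρ t ≤ s) :
    (∑ t : Fin T, x' t / ρ t ≤ s) ∧
      c * max 0 (d - ∑ t : Fin T, x' t) = c * max 0 (d - ∑ t : Fin T, x t) := by
  refine ⟨?_, by rw [heq]⟩
  rcases Nat.eq_zero_or_pos T with hT | hT
  · subst hT; simpa using hfeas
  set w : ℕ → ℝ := fun i => if h : i < T then 1 / ρ ⟨i, h⟩ else 0 with hw
  set Y : ℕ → ℝ := fun i => if h : i < T then x' ⟨i, h⟩ - x ⟨i, h⟩ else 0 with hY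
  have key : ∑ i ∈ Finset.range T, w i • Y i ≤ 0 := by
    rw [Finset.sum_range_by_parts]
    have htot : ∑ i ∈ Finset.range T, Y i = 0 := by
      have : ∑ i ∈ Finset.range T, Y i = ∑ t : Fin T, (x' t - x t) := by
        simp only [hY]; exact sum_range_dite (fun t => x' t - x t)
      rw [this, Finset.sum_sub_distrib, ← heq, sub_self]
    rw [htot, smul_zero, zero_sub, neg_nonpos]
    refine Finset.sum_nonneg fun i hi => ?_
    have hi1 : i + 1 < T := by
      have := Finset.mem_range.mp hi; omega
    have hiT : i < T := by omega
    have hwmono : w i ≤ w (i + 1) := by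
      simp only [hw, hiT, hi1, dif_pos]
      have h1 := hρpos ⟨i, hiT⟩
      have h2 := hρpos ⟨i + 1, hi1⟩
      have h3 : ρ ⟨i + 1, hi1⟩ ≤ ρ ⟨i, hiT⟩ := hρmono (by simp [Fin.le_def])
      exact one_div_le_one_div_of_le h2 h3
    have hS : 0 ≤ ∑ j ∈ Finset.range (i + 1), Y j := by
      have hYc : ∑ j ∈ Finset.range (i + 1), Y j
          = ∑ τ ∈ Finset.Iic (⟨i, hiT⟩ : Fin T), x' τ - ∑ τ ∈ Finset.Iic (⟨i, hiT⟩ : Fin T), x τ := by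
        rw [sum_Iic_fin x' ⟨i, hiT⟩, sum_Iic_fin x ⟨i, hiT⟩, ← Finset.sum_sub_distrib]
        refine Finset.sum_congr rfl fun j hj => ?_
        have : j < T := lt_of_lt_of_le (Finset.mem_range.mp hj) (by omega)
        simp [hY, this]
      rw [hYc, sub_nonneg]
      exact hdom _
    have : (0:ℝ) ≤ (w (i + 1) - w i) * (∑ j ∈ Finset.range (i + 1), Y j) :=
      mul_nonneg (by linarith) hS
    simpa [smul_eq_mul] using this
  have hconv : ∑ i ∈ Finset.range T, w i • Y i
      = ∑ t : Fin T, x' t / ρ t - ∑ t : Fin T, x t / ρ t := by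
    rw [← Finset.sum_sub_distrib,
      ← sum_range_dite (fun t => x' t / ρ t - x t / ρ t)]
    refine Finset.sum_congr rfl fun i hi => ?_
    have hiT := Finset.mem_range.mp hi
    simp only [hw, hY, hiT, dif_pos, smul_eq_mul]
    field_simp
  linarith [hconv ▸ key]
end

section
/- In the setting of the Emulator Oracle, let x be the emulated profile and x̃ the canonical profile, and let k be the largest index with ∑_i x_{ik} > 0. Then the total final hires satisfy ∑_i ∑_{t≤T} x_{it} − L̂_T ≤ ∑_i ∑_{t≤k} x̃_{it} − (R_0 − min_{τ≤k}(Δ_τ + 2ε_τ)), where L̂_T = max_{τ≤T}(L_τ − ε_τ). In particular the overstaffing above L̂_T is bounded by the canonical profile's overstaffing against the single-switch sequence switching at time k. -/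
/-- The tightest upper bound `R̂ t = min_{τ ≤ t} (R τ + ε τ)`. -/
noncomputable def Rhat {T : ℕ} (R ε : Fin (T + 1) → ℝ) (t : Fin (T + 1)) : ℝ :=
  (Finset.Iic t).inf' ⟨t, Finset.mem_Iic.mpr le_rfl⟩ (fun τ => R τ + ε τ)

/-- The tightest lower bound `L̂ t = max_{τ ≤ t} (L τ − ε τ)`. -/
noncomputable def Lhat {T : ℕ} (L ε : Fin (T + 1) → ℝ) (t : Fin (T + 1)) : ℝ :=
  (Finset.Iic t).sup' ⟨t, Finset.mem_Iic.mpr le_rfl⟩ (fun τ => L τ - ε τ)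

/-- bounded overstaffing of the Emulator Oracle, Lemma 3.2.
If `x` is the emulated profile for a canonical profile `x̃` (hires start at time 1,
period totals follow the emulator recursion) and `k` is the last time with positive
hires, then the final overstaffing above `L̂_T` is bounded by the canonical profile's
overstaffing against the single-switch sequence switching at `k`:
`∑ᵢ∑ₜ x − L̂_T ≤ ∑ᵢ∑_{t ≤ k} x̃ − (R₀ − min_{τ ≤ k}(Δ τ + 2 ε τ))`. -/
theorem emulator_bounded_overstaffing
    (n T : ℕ) (L R ε : Fin (T + 1) → ℝ)
    (hε : ∀ t, 0 ≤ ε t) (hε0 : ε 0 = 0)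
    (xtil x : Fin n → Fin (T + 1) → ℝ)
    (hxtil : ∀ i t, 0 ≤ xtil i t) (hxtil0 : ∀ i, xtil i 0 = 0)
    (hx : ∀ i t, 0 ≤ x i t ∧ x i t ≤ xtil i t)
    (hsum : ∀ t : Fin (T + 1), ∑ i, x i t =
      max 0 ((∑ τ ∈ Finset.Iic t, ∑ i, xtil i τ) -
        (∑ τ ∈ Finset.Iio t, ∑ i, x i τ) - (R 0 - Rhat R ε t)))
    (k : Fin (T + 1)) (hk : 0 < ∑ i, x i k)
    (hklast : ∀ t, k < t → ∑ i, x i t = 0) :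
    (∑ i, ∑ t, x i t) - Lhat L ε (Fin.last T) ≤
      (∑ i, ∑ t ∈ Finset.Iic k, xtil i t) -
        (R 0 - (Finset.Iic k).inf' ⟨k, Finset.mem_Iic.mpr le_rfl⟩
          (fun τ => (R τ - L τ) + 2 * ε τ)) := by
  -- total x = sum over Iic k
  have h1 : (∑ i, ∑ t, x i t) = ∑ t ∈ Finset.Iic k, ∑ i, x i t := by
    rw [Finset.sum_comm]
    refine (Finset.sum_subset (Finset.subset_univ _) ?_).symm
    intro t _ ht
    exact hklast t (lt_of_not_ge (fun h => ht (Finset.mem_Iic.mpr h)))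
  -- max picks the expression at k
  have h2 : (∑ τ ∈ Finset.Iic k, ∑ i, x i τ) =
      (∑ τ ∈ Finset.Iic k, ∑ i, xtil i τ) - (R 0 - Rhat R ε k) := by
    have hsk := hsum k
    have hE : (∑ i, x i k) = (∑ τ ∈ Finset.Iic k, ∑ i, xtil i τ) -
        (∑ τ ∈ Finset.Iio k, ∑ i, x i τ) - (R 0 - Rhat R ε k) := by
      rcases max_cases (0:ℝ) ((∑ τ ∈ Finset.Iic k, ∑ i, xtil i τ) -
        (∑ τ ∈ Finset.Iio k, ∑ i, x i τ) - (R 0 - Rhat R ε k)) with ⟨h, _⟩ | ⟨h, _⟩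
      · rw [hsk, h] at hk; exact absurd hk (lt_irrefl 0)
      · rw [hsk, h]
    have hins : ∑ τ ∈ Finset.Iic k, ∑ i, x i τ =
        (∑ i, x i k) + ∑ τ ∈ Finset.Iio k, ∑ i, x i τ := by
      rw [← Finset.Iio_insert, Finset.sum_insert (by simp)]
    rw [hins, hE]; ring
  -- Rhat k - Lhat T ≤ inf
  have h3 : Rhat R ε k - Lhat L ε (Fin.last T) ≤
      (Finset.Iic k).inf' ⟨k, Finset.mem_Iic.mpr le_rfl⟩
        (fun τ => (R τ - L τ) + 2 * ε τ) := by
    apply Finset.le_inf'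
    intro τ hτ
    have hR : Rhat R ε k ≤ R τ + ε τ := Finset.inf'_le _ hτ
    have hL : L τ - ε τ ≤ Lhat L ε (Fin.last T) := by
      unfold Lhat
      exact Finset.le_sup' (fun τ => L τ - ε τ) (Finset.mem_Iic.mpr (Fin.le_last τ))
    linarith
  have hcomm : (∑ i, ∑ t ∈ Finset.Iic k, xtil i t) = ∑ τ ∈ Finset.Iic k, ∑ i, xtil i τ :=
    Finset.sum_comm
  rw [h1, h2, hcomm] at *
  linarith
end

section
/- In the setting of the Emulator Oracle, the final total hires satisfy R̂_T − ∑_i ∑_{t≤T} x_{it} ≤ R_0 − ∑_i ∑_{t≤T} x̃_{it}, where R̂_T = min_{τ≤T}(R_τ + ε_τ). That is, the understaffing of the emulated profile against the tightest consistent upper bound is at most the understaffing of the canonical profile against R_0. -/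
/-- bounded understaffing of the Emulator Oracle, Lemma 3.2.
For the emulated profile `x` of a canonical profile `x̃`, the final understaffing
against the tightest consistent upper bound satisfies
`R̂_T − ∑ᵢ∑ₜ x ≤ R₀ − ∑ᵢ∑ₜ x̃`. -/
theorem emulator_bounded_understaffing
    (n T : ℕ) (L R ε : Fin (T + 1) → ℝ)
    (hε : ∀ t, 0 ≤ ε t) (hε0 : ε 0 = 0)
    (xtil x : Fin n → Fin (T + 1) → ℝ)
    (hxtil : ∀ i t, 0 ≤ xtil i t) (hxtil0 : ∀ i, xtil i 0 = 0)
    (hx : ∀ i t, 0 ≤ x i t ∧ x i t ≤ xtil i t)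
    (hsum : ∀ t : Fin (T + 1), ∑ i, x i t =
      max 0 ((∑ τ ∈ Finset.Iic t, ∑ i, xtil i τ) -
        (∑ τ ∈ Finset.Iio t, ∑ i, x i τ) - (R 0 - Rhat R ε t))) :
    Rhat R ε (Fin.last T) - (∑ i, ∑ t, x i t) ≤
      R 0 - (∑ i, ∑ t, xtil i t) := by
  have huniv : (Finset.Iic (Fin.last T)) = (Finset.univ : Finset (Fin (T + 1))) := by
    ext τ; simp [Fin.le_last]
  have hsplit : ∀ f : Fin (T + 1) → ℝ,
      ∑ t, f t = ∑ τ ∈ Finset.Iio (Fin.last T), f τ + f (Fin.last T) := by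
    intro f
    rw [← huniv, ← Finset.Iio_insert, Finset.sum_insert (Finset.notMem_Iio_self)]
    ring
  have hlast := hsum (Fin.last T)
  have hge : (∑ τ ∈ Finset.Iic (Fin.last T), ∑ i, xtil i τ) -
      (∑ τ ∈ Finset.Iio (Fin.last T), ∑ i, x i τ) -
      (R 0 - Rhat R ε (Fin.last T)) ≤ ∑ i, x i (Fin.last T) := by
    rw [hlast]; exact le_max_right _ _
  have hxsum : ∑ i, ∑ t, x i t =
      ∑ τ ∈ Finset.Iio (Fin.last T), ∑ i, x i τ + ∑ i, x i (Fin.last T) := by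
    rw [Finset.sum_comm]; exact hsplit _
  have hxtilsum : ∑ i, ∑ t, xtil i t = ∑ τ ∈ Finset.Iic (Fin.last T), ∑ i, xtil i τ := by
    rw [Finset.sum_comm, huniv]
  linarith
end

section
/- Suppose (x*, Γ*) is feasible for the LP: (i) ∑_t x*_{it}/ρ_{it} ≤ s_i for all pools i; (ii) ∑_i ∑_{t≤k} x*_{it} ≤ max_{τ∈[0:k]}(R_0 − Δ_τ − 2ε_τ) + Γ*/C for all k ∈ [T]; (iii) ∑_i ∑_{t≤T} x*_{it} ≥ R_0 − Γ*/c. If an online profile x satisfies the two emulator properties — (a) ∑_i ∑_t x_{it} − max_{τ}(L_τ − ε_τ) ≤ max_k [ ∑_i ∑_{t≤k} x*_{it} − (max_{τ≤k}(R_0 − Δ_τ − 2ε_τ)) ] and (b) min_τ(R_τ+ε_τ) − ∑_i ∑_t x_{it} ≤ R_0 − ∑_i ∑_{t≤T} x*_{it} — then for every demand d with max_τ(L_τ−ε_τ) ≤ d ≤ min_τ(R_τ+ε_τ), the imbalance cost c·(d − ∑ x)^+ + C·(∑ x − d)^+ is at most Γ*. -/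
/-- Lemma 3.3. If `(x*, Γ*)` is feasible for LP-single-switch
and an online profile `x` satisfies the two emulator properties (bounded
overstaffing and bounded understaffing relative to `x*`), then for every demand
`d` consistent with the predictions the imbalance cost of `x` is at most `Γ*`. -/
theorem lp_emulator_cost_guarantee
    (n T : ℕ) (hT : 1 ≤ T) (c C : ℝ) (hc : 0 < c) (hC : 0 < C)
    (s : Fin n → ℝ) (ρ : Fin n → ℕ → ℝ)
    (L R ε Δ : ℕ → ℝ) (hε0 : ε 0 = 0)
    (xstar : Fin n → ℕ → ℝ) (Γstar : ℝ) (hΓ : 0 ≤ Γstar)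
    (hfeas1 : ∀ i, ∑ t ∈ Finset.Icc 1 T, xstar i t / ρ i t ≤ s i)
    (hfeas2 : ∀ k ∈ Finset.Icc 1 T,
      ∑ i, ∑ t ∈ Finset.Icc 1 k, xstar i t ≤
        (Finset.Iic k).sup' ⟨k, Finset.mem_Iic.mpr le_rfl⟩
          (fun τ => R 0 - Δ τ - 2 * ε τ) + Γstar / C)
    (hfeas3 : R 0 - Γstar / c ≤ ∑ i, ∑ t ∈ Finset.Icc 1 T, xstar i t)
    (x : Fin n → ℕ → ℝ)
    (ha : (∑ i, ∑ t ∈ Finset.Icc 1 T, x i t) -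
        (Finset.Iic T).sup' ⟨T, Finset.mem_Iic.mpr le_rfl⟩ (fun τ => L τ - ε τ) ≤
      (Finset.Icc 1 T).sup' (Finset.nonempty_Icc.mpr hT)
        (fun k => (∑ i, ∑ t ∈ Finset.Icc 1 k, xstar i t) -
          (Finset.Iic k).sup' ⟨k, Finset.mem_Iic.mpr le_rfl⟩
            (fun τ => R 0 - Δ τ - 2 * ε τ)))
    (hb : (Finset.Iic T).inf' ⟨T, Finset.mem_Iic.mpr le_rfl⟩ (fun τ => R τ + ε τ) -
        (∑ i, ∑ t ∈ Finset.Icc 1 T, x i t) ≤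
      R 0 - ∑ i, ∑ t ∈ Finset.Icc 1 T, xstar i t)
    (d : ℝ)
    (hd1 : (Finset.Iic T).sup' ⟨T, Finset.mem_Iic.mpr le_rfl⟩ (fun τ => L τ - ε τ) ≤ d)
    (hd2 : d ≤ (Finset.Iic T).inf' ⟨T, Finset.mem_Iic.mpr le_rfl⟩ (fun τ => R τ + ε τ)) :
    c * max 0 (d - ∑ i, ∑ t ∈ Finset.Icc 1 T, x i t) +
      C * max 0 ((∑ i, ∑ t ∈ Finset.Icc 1 T, x i t) - d) ≤ Γstar := by
  set X := ∑ i, ∑ t ∈ Finset.Icc 1 T, x i t with hX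
  rcases le_total d X with h | h
  · have h1 : max 0 (d - X) = 0 := max_eq_left (by linarith)
    have h2 : max 0 (X - d) = X - d := max_eq_right (by linarith)
    have hsup : (Finset.Icc 1 T).sup' (Finset.nonempty_Icc.mpr hT)
        (fun k => (∑ i, ∑ t ∈ Finset.Icc 1 k, xstar i t) -
          (Finset.Iic k).sup' ⟨k, Finset.mem_Iic.mpr le_rfl⟩
            (fun τ => R 0 - Δ τ - 2 * ε τ)) ≤ Γstar / C := by
      apply Finset.sup'_le
      intro k hk
      have := hfeas2 k hk
      linarith
    have hXd : X - d ≤ Γstar / C := by linarith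
    have : C * (X - d) ≤ C * (Γstar / C) := by
      exact mul_le_mul_of_nonneg_left hXd hC.le
    rw [h1, h2, mul_zero, zero_add]
    calc C * (X - d) ≤ C * (Γstar / C) := this
      _ = Γstar := by field_simp
  · have h1 : max 0 (d - X) = d - X := max_eq_right (by linarith)
    have h2 : max 0 (X - d) = 0 := max_eq_left (by linarith)
    have hdX : d - X ≤ Γstar / c := by linarith
    rw [h1, h2, mul_zero, add_zero]
    calc c * (d - X) ≤ c * (Γstar / c) := mul_le_mul_of_nonneg_left hdX hc.le
      _ = Γstar := by field_simp
end

section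
/- Consider the single-pool LP: minimize Γ ≥ 0 over x_t ≥ 0 subject to ∑_t x_t/ρ_t ≤ s, ∑_{t≤k} x_t ≤ (R_0 − Δ_k) + Γ/C for all k, and ∑_t x_t ≥ R_0 − Γ/c, where Δ_t is weakly decreasing with Δ_t ≤ R_0 − L_0 and ρ_t ∈ (0,1] is weakly decreasing. If c·(R_0 − ρ_1·s) > C·(ρ_1·s − (R_0 − Δ_1)), then the optimal value of this LP equals c·(R_0 − ρ_1·s). -/
/-- low-initial-supply case. For the single-pool
LP-single-switch with weakly decreasing prediction errors `Δ` and weakly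
decreasing availability rates `ρ ∈ (0,1]`, if
`c·(R₀ − ρ₁·s) > C·(ρ₁·s − (R₀ − Δ₁))` then the optimal LP value equals
`c·(R₀ − ρ₁·s)`. -/
theorem single_pool_lp_low_supply_value
    (T : ℕ) (hT : 1 ≤ T)
    (c C s L0 R0 : ℝ) (hc : 0 < c) (hC : 0 < C) (hs : 0 < s) (hLR : L0 ≤ R0)
    (ρ Δ : ℕ → ℝ)
    (hρpos : ∀ t ∈ Finset.Icc 1 T, 0 < ρ t)
    (hρle : ∀ t ∈ Finset.Icc 1 T, ρ t ≤ 1)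
    (hρanti : ∀ t ∈ Finset.Icc 1 T, ∀ t' ∈ Finset.Icc 1 T, t ≤ t' → ρ t' ≤ ρ t)
    (hΔnonneg : ∀ t ∈ Finset.Icc 1 T, 0 ≤ Δ t)
    (hΔanti : ∀ t ∈ Finset.Icc 1 T, ∀ t' ∈ Finset.Icc 1 T, t ≤ t' → Δ t' ≤ Δ t)
    (hΔle : ∀ t ∈ Finset.Icc 1 T, Δ t ≤ R0 - L0)
    (hlow : c * (R0 - ρ 1 * s) > C * (ρ 1 * s - (R0 - Δ 1))) :
    sInf {Γ : ℝ | 0 ≤ Γ ∧ ∃ x : ℕ → ℝ,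
        (∀ t, 0 ≤ x t) ∧
        (∑ t ∈ Finset.Icc 1 T, x t / ρ t ≤ s) ∧
        (∀ k ∈ Finset.Icc 1 T, ∑ t ∈ Finset.Icc 1 k, x t ≤ (R0 - Δ k) + Γ / C) ∧
        (R0 - Γ / c ≤ ∑ t ∈ Finset.Icc 1 T, x t)} =
      c * (R0 - ρ 1 * s) := by
  have h1 : (1 : ℕ) ∈ Finset.Icc 1 T := Finset.mem_Icc.mpr ⟨le_refl 1, hT⟩
  have hρ1 : 0 < ρ 1 := hρpos 1 h1
  have hΔ1 : 0 ≤ Δ 1 := hΔnonneg 1 h1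
  -- R0 > ρ 1 * s
  have hR : ρ 1 * s < R0 := by
    by_contra h
    push_neg at h
    nlinarith [mul_nonneg hC.le hΔ1, mul_nonneg hC.le (by linarith : (0:ℝ) ≤ ρ 1 * s - R0),
      mul_nonneg hc.le (by linarith : (0:ℝ) ≤ ρ 1 * s - R0)]
  set Γ₀ := c * (R0 - ρ 1 * s) with hΓ₀
  have hΓ₀pos : 0 < Γ₀ := mul_pos hc (by linarith)
  -- lower bound on every feasible Γ
  have hlb : ∀ Γ ∈ {Γ : ℝ | 0 ≤ Γ ∧ ∃ x : ℕ → ℝ,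
        (∀ t, 0 ≤ x t) ∧
        (∑ t ∈ Finset.Icc 1 T, x t / ρ t ≤ s) ∧
        (∀ k ∈ Finset.Icc 1 T, ∑ t ∈ Finset.Icc 1 k, x t ≤ (R0 - Δ k) + Γ / C) ∧
        (R0 - Γ / c ≤ ∑ t ∈ Finset.Icc 1 T, x t)}, Γ₀ ≤ Γ := by
    rintro Γ ⟨hΓ0, x, hx0, hsup, hup, hlo⟩
    have hsum : ∑ t ∈ Finset.Icc 1 T, x t ≤ ρ 1 * s := by
      have key : ∑ t ∈ Finset.Icc 1 T, x t ≤ ∑ t ∈ Finset.Icc 1 T, ρ 1 * (x t / ρ t) := by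
        apply Finset.sum_le_sum
        intro t ht
        have hρt : 0 < ρ t := hρpos t ht
        have hle : ρ t ≤ ρ 1 := hρanti 1 h1 t ht (Finset.mem_Icc.mp ht).1
        rw [mul_div_assoc']
        rw [le_div_iff₀ hρt]
        nlinarith [hx0 t]
      calc ∑ t ∈ Finset.Icc 1 T, x t ≤ ∑ t ∈ Finset.Icc 1 T, ρ 1 * (x t / ρ t) := key
        _ = ρ 1 * ∑ t ∈ Finset.Icc 1 T, x t / ρ t := (Finset.mul_sum _ _ _).symm
        _ ≤ ρ 1 * s := by nlinarith
    have : R0 - Γ / c ≤ ρ 1 * s := le_trans hlo hsum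
    have : R0 - ρ 1 * s ≤ Γ / c := by linarith
    rw [le_div_iff₀ hc] at this
    nlinarith
  -- Γ₀ is feasible
  have hmem : Γ₀ ∈ {Γ : ℝ | 0 ≤ Γ ∧ ∃ x : ℕ → ℝ,
        (∀ t, 0 ≤ x t) ∧
        (∑ t ∈ Finset.Icc 1 T, x t / ρ t ≤ s) ∧
        (∀ k ∈ Finset.Icc 1 T, ∑ t ∈ Finset.Icc 1 k, x t ≤ (R0 - Δ k) + Γ / C) ∧
        (R0 - Γ / c ≤ ∑ t ∈ Finset.Icc 1 T, x t)} := by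
    refine ⟨hΓ₀pos.le, fun t => if t = 1 then ρ 1 * s else 0, ?_, ?_, ?_, ?_⟩
    · intro t
      by_cases ht : t = 1 <;> simp [ht]
      positivity
    · have : ∑ t ∈ Finset.Icc 1 T, (if t = 1 then ρ 1 * s else 0) / ρ t = ρ 1 * s / ρ 1 := by
        rw [Finset.sum_eq_single_of_mem 1 h1]
        · simp
        · intro t _ ht; simp [ht]
      rw [this, mul_comm, mul_div_assoc, div_self hρ1.ne', mul_one]
    · intro k hk
      have h1k : (1 : ℕ) ∈ Finset.Icc 1 k := Finset.mem_Icc.mpr ⟨le_refl 1, (Finset.mem_Icc.mp hk).1⟩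
      have : ∑ t ∈ Finset.Icc 1 k, (if t = 1 then ρ 1 * s else 0) = ρ 1 * s := by
        rw [Finset.sum_eq_single_of_mem 1 h1k]
        · simp
        · intro t _ ht; simp [ht]
      rw [this]
      have hΔk : Δ k ≤ Δ 1 := hΔanti 1 h1 k hk (Finset.mem_Icc.mp hk).1
      have : ρ 1 * s - (R0 - Δ 1) < Γ₀ / C := by
        rw [lt_div_iff₀ hC]; nlinarith
      linarith
    · have : ∑ t ∈ Finset.Icc 1 T, (if t = 1 then ρ 1 * s else 0) = ρ 1 * s := by
        rw [Finset.sum_eq_single_of_mem 1 h1]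
        · simp
        · intro t _ ht; simp [ht]
      rw [this, hΓ₀, mul_div_cancel_left₀ _ hc.ne']
      linarith
  exact le_antisymm (csInf_le ⟨Γ₀, hlb⟩ hmem) (le_csInf ⟨Γ₀, hmem⟩ hlb)
end

section
/- For the single-switch prediction sequences P^(k) defined by L_t^(k) = R_0 − ε_t − Δ_t, R_t^(k) = R_0 − ε_t for t ≤ k and L_t^(k) = max_{τ∈[0:k]}(R_0 − Δ_τ − 2ε_τ), R_t^(k) = L_t^(k) + Δ_t for t > k: (a) for any k, k' and any t ≤ min(k,k'), the intervals [L_t^(k), R_t^(k)] and [L_t^(k')}, R_t^{(k')}] coincide; (b) each P^(k) is (ε,0)-consistent with the demand d_k = L_T^{(k)} = max_{τ∈[0:k]}(R_0 − Δ_τ − 2ε_τ): for every t there exists d̂_t ∈ [L_t^{(k)}, R_t^{(k)}] with |d_k − d̂_t| ≤ ε_t; and (c) each P^(k) satisfies the error bounds R_t^{(k)} − L_t^{(k)} ≤ Δ_t with equality. -/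
/-- `M k = max_{τ ∈ [0:k]} (R₀ − Δ τ − 2 ε τ)`, the post-switch lower endpoint. -/
noncomputable def Mval (Δ ε : ℕ → ℝ) (R0 : ℝ) (k : ℕ) : ℝ :=
  (Finset.Iic k).sup' ⟨k, Finset.mem_Iic.mpr le_rfl⟩ (fun τ => R0 - Δ τ - 2 * ε τ)

/-- Lower endpoints of the single-switch prediction sequence `P^(k)`. -/
noncomputable def Lsw (Δ ε : ℕ → ℝ) (R0 : ℝ) (k t : ℕ) : ℝ :=
  if t ≤ k then R0 - ε t - Δ t else Mval Δ ε R0 k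

/-- Upper endpoints of the single-switch prediction sequence `P^(k)`. -/
noncomputable def Rsw (Δ ε : ℕ → ℝ) (R0 : ℝ) (k t : ℕ) : ℝ :=
  if t ≤ k then R0 - ε t else Mval Δ ε R0 k + Δ t

/-- Properties of the single-switch prediction sequences:
(a) for `t ≤ min(k, k')` the intervals of `P^(k)` and `P^(k')` coincide;
(b) each `P^(k)` is `(ε, 0)`-consistent with the demand `d_k = M k`;
(c) each `P^(k)` meets the error bounds `R_t^(k) − L_t^(k) = Δ t` with equality. -/
theorem single_switch_properties
    (T : ℕ) (L0 R0 : ℝ) (Δ ε : ℕ → ℝ)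
    (hΔ : ∀ t, 0 ≤ Δ t) (hε : ∀ t, 0 ≤ ε t)
    (hε0 : ε 0 = 0) (hΔ0 : Δ 0 = R0 - L0)
    (hrange : ∀ τ, τ ≤ T → L0 ≤ R0 - Δ τ - 2 * ε τ) :
    (∀ k k' t : ℕ, t ≤ k → t ≤ k' →
        Lsw Δ ε R0 k t = Lsw Δ ε R0 k' t ∧ Rsw Δ ε R0 k t = Rsw Δ ε R0 k' t) ∧
    (∀ k t : ℕ, t ≤ T → ∃ dh : ℝ,
        Lsw Δ ε R0 k t ≤ dh ∧ dh ≤ Rsw Δ ε R0 k t ∧ |Mval Δ ε R0 k - dh| ≤ ε t) ∧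
    (∀ k t : ℕ, Rsw Δ ε R0 k t - Lsw Δ ε R0 k t = Δ t) := by
  have hMle : ∀ k, Mval Δ ε R0 k ≤ R0 := by
    intro k
    apply Finset.sup'_le
    intro τ _
    have := hΔ τ; have := hε τ; linarith
  have hMge : ∀ k t, t ≤ k → R0 - Δ t - 2 * ε t ≤ Mval Δ ε R0 k := by
    intro k t ht
    exact Finset.le_sup' (fun τ => R0 - Δ τ - 2 * ε τ) (Finset.mem_Iic.mpr ht)
  refine ⟨?_, ?_, ?_⟩
  · intro k k' t hk hk'
    simp [Lsw, Rsw, hk, hk']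
  · intro k t _
    by_cases ht : t ≤ k
    · refine ⟨min (Mval Δ ε R0 k + ε t) (R0 - ε t), ?_, ?_, ?_⟩
      · simp only [Lsw, ht, if_true, le_min_iff]
        constructor
        · have := hMge k t ht; linarith
        · have := hΔ t; linarith
      · simp only [Rsw, ht, if_true]
        exact min_le_right _ _
      · rw [abs_le]
        constructor
        · have h1 : min (Mval Δ ε R0 k + ε t) (R0 - ε t) ≤ Mval Δ ε R0 k + ε t :=
            min_le_left _ _
          linarith
        · have h2 : Mval Δ ε R0 k - ε t ≤ min (Mval Δ ε R0 k + ε t) (R0 - ε t) := by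
            rw [le_min_iff]
            have := hε t; have := hMle k
            constructor <;> linarith
          linarith
    · refine ⟨Mval Δ ε R0 k, ?_, ?_, ?_⟩
      · simp [Lsw, ht]
      · simp only [Rsw, ht, if_false]
        have := hΔ t; linarith
      · simpa using hε t
  · intro k t
    by_cases ht : t ≤ k <;> simp [Lsw, Rsw, ht] <;> ring
end

section
/- Fix any deterministic online algorithm whose hires at time t depend only on the predictions revealed up to time t. Run it against the single-switch sequences P^(k); since these agree up to time min(k,k'), the per-period hires x_{it} are the same under all P^(k) with k ≥ t. If the algorithm's worst-case cost over all these sequences and consistent demands is at most Γ, then the numbers x_{it} (its hires under P^(T)) together with Γ form a feasible solution of LP-single-switch: ∑_t x_{it}/ρ_{it} ≤ s_i; ∑_i ∑_{t≤k} x_{it} ≤ max_{τ∈[0:k]}(R_0 − Δ_τ − 2ε_τ) + Γ/C for each k; and ∑_i ∑_{t≤T} x_{it} ≥ R_0 − Γ/c. Hence the LP optimum lower-bounds the minimax cost. -/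
/-- The single-switch prediction sequence `P^(k)` as intervals. -/
noncomputable def Pseq (Δ ε : ℕ → ℝ) (R0 : ℝ) (k t : ℕ) : ℝ × ℝ :=
  (Lsw Δ ε R0 k t, Rsw Δ ε R0 k t)

/-- Lemma 3.1, deterministic case. A deterministic, feasible,
online algorithm with worst-case cost at most `Γ` against the single-switch
sequences and their consistent demands yields, via its hires under `P^(T)`, a
feasible solution of LP-single-switch with value `Γ`. -/
theorem single_switch_lp_lower_bound
    (n T : ℕ) (hT : 1 ≤ T)
    (c C : ℝ) (hc : 0 < c) (hC : 0 < C)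
    (s : Fin n → ℝ) (ρ : Fin n → ℕ → ℝ) (hρ : ∀ i t, 0 < ρ i t)
    (R0 L0 : ℝ) (Δ ε : ℕ → ℝ)
    (hΔ : ∀ t, 0 ≤ Δ t) (hε : ∀ t, 0 ≤ ε t)
    (hε0 : ε 0 = 0) (hΔ0 : Δ 0 = R0 - L0)
    (ALG : (ℕ → ℝ × ℝ) → Fin n → ℕ → ℝ)
    (hnonneg : ∀ P i t, 0 ≤ ALG P i t)
    (honline : ∀ P P' : ℕ → ℝ × ℝ, ∀ t : ℕ, (∀ τ ≤ t, P τ = P' τ) →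
      ∀ i, ALG P i t = ALG P' i t)
    (hsupply : ∀ P : ℕ → ℝ × ℝ, ∀ i,
      ∑ t ∈ Finset.Icc 1 T, ALG P i t / ρ i t ≤ s i)
    (Γ : ℝ)
    (hcost : ∀ k ∈ Finset.Icc 1 T, ∀ d : ℝ,
      (∀ t ≤ T, ∃ dh : ℝ,
        (Pseq Δ ε R0 k t).1 ≤ dh ∧ dh ≤ (Pseq Δ ε R0 k t).2 ∧ |d - dh| ≤ ε t) →
      c * max 0 (d - ∑ i, ∑ t ∈ Finset.Icc 1 T, ALG (Pseq Δ ε R0 k) i t) +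
        C * max 0 ((∑ i, ∑ t ∈ Finset.Icc 1 T, ALG (Pseq Δ ε R0 k) i t) - d) ≤ Γ) :
    (∀ i, ∑ t ∈ Finset.Icc 1 T, ALG (Pseq Δ ε R0 T) i t / ρ i t ≤ s i) ∧
    (∀ k ∈ Finset.Icc 1 T,
      ∑ i, ∑ t ∈ Finset.Icc 1 k, ALG (Pseq Δ ε R0 T) i t ≤ Mval Δ ε R0 k + Γ / C) ∧
    (R0 - Γ / c ≤ ∑ i, ∑ t ∈ Finset.Icc 1 T, ALG (Pseq Δ ε R0 T) i t) := by
  have hMle : ∀ k, Mval Δ ε R0 k ≤ R0 := by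
    intro k
    apply Finset.sup'_le
    intro τ _
    nlinarith [hΔ τ, hε τ]
  have hMge : ∀ k t, t ≤ k → R0 - Δ t - 2 * ε t ≤ Mval Δ ε R0 k := by
    intro k t ht
    exact Finset.le_sup' (fun τ => R0 - Δ τ - 2 * ε τ) (Finset.mem_Iic.mpr ht)
  -- agreement of P^(k) and P^(T) up to time k
  have hagree : ∀ k ≤ T, ∀ τ ≤ k, Pseq Δ ε R0 k τ = Pseq Δ ε R0 T τ := by
    intro k hk τ hτ
    simp [Pseq, Lsw, Rsw, hτ, hτ.trans hk]
  have hALG : ∀ k, k ≤ T → ∀ i, ∀ t ≤ k,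
      ALG (Pseq Δ ε R0 k) i t = ALG (Pseq Δ ε R0 T) i t := by
    intro k hk i t ht
    exact honline _ _ t (fun τ hτ => hagree k hk τ (hτ.trans ht)) i
  refine ⟨fun i => hsupply _ i, ?_, ?_⟩
  · -- overstaffing constraints
    intro k hk
    rw [Finset.mem_Icc] at hk
    -- consistent demand d = Mval k for P^(k)
    have hcons : ∀ t ≤ T, ∃ dh : ℝ,
        (Pseq Δ ε R0 k t).1 ≤ dh ∧ dh ≤ (Pseq Δ ε R0 k t).2 ∧
        |Mval Δ ε R0 k - dh| ≤ ε t := by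
      intro t _
      by_cases ht : t ≤ k
      · have h1 := hMge k t ht
        have h2 := hMle k
        have h3 := hε t
        have h4 := hΔ t
        refine ⟨max (R0 - ε t - Δ t) (min (R0 - ε t) (Mval Δ ε R0 k)), ?_, ?_, ?_⟩
        · simp only [Pseq, Lsw, ht, if_pos]
          exact le_max_left _ _
        · simp only [Pseq, Rsw, ht, if_pos]
          exact max_le (by linarith) (min_le_left _ _)
        · rcases le_total (Mval Δ ε R0 k) (R0 - ε t - Δ t) with hA | hA
          · have hm : min (R0 - ε t) (Mval Δ ε R0 k) = Mval Δ ε R0 k :=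
              min_eq_right (by linarith)
            rw [hm, max_eq_left hA, abs_le]; constructor <;> linarith
          · rcases le_total (R0 - ε t) (Mval Δ ε R0 k) with hB | hB
            · have hm : min (R0 - ε t) (Mval Δ ε R0 k) = R0 - ε t := min_eq_left hB
              rw [hm, max_eq_right (by linarith), abs_le]; constructor <;> linarith
            · have hm : min (R0 - ε t) (Mval Δ ε R0 k) = Mval Δ ε R0 k :=
                min_eq_right hB
              rw [hm, max_eq_right hA]; simpa using h3
      · refine ⟨Mval Δ ε R0 k, ?_, ?_, by simp [hε t]⟩
        · simp [Pseq, Lsw, ht]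
        · simp only [Pseq, Rsw, ht, if_neg, not_false_iff]
          linarith [hΔ t]
    have hcst := hcost k (Finset.mem_Icc.mpr hk) (Mval Δ ε R0 k) hcons
    set Xk := ∑ i, ∑ t ∈ Finset.Icc 1 T, ALG (Pseq Δ ε R0 k) i t with hXk
    have h1 : C * (Xk - Mval Δ ε R0 k) ≤ Γ := by
      have hmax : Xk - Mval Δ ε R0 k ≤ max 0 (Xk - Mval Δ ε R0 k) := le_max_right _ _
      have h0 : 0 ≤ c * max 0 (Mval Δ ε R0 k - Xk) :=
        mul_nonneg hc.le (le_max_left _ _)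
      nlinarith [mul_le_mul_of_nonneg_left hmax hC.le]
    have h2 : Xk ≤ Mval Δ ε R0 k + Γ / C := by
      rw [← sub_le_iff_le_add']
      exact (le_div_iff₀' hC).mpr h1
    -- prefix sum under P^(T) equals prefix sum under P^(k), bounded by Xk
    have h3 : ∑ i, ∑ t ∈ Finset.Icc 1 k, ALG (Pseq Δ ε R0 T) i t ≤ Xk := by
      rw [hXk]
      apply Finset.sum_le_sum
      intro i _
      calc ∑ t ∈ Finset.Icc 1 k, ALG (Pseq Δ ε R0 T) i t
          = ∑ t ∈ Finset.Icc 1 k, ALG (Pseq Δ ε R0 k) i t := by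
            apply Finset.sum_congr rfl
            intro t htm
            rw [Finset.mem_Icc] at htm
            exact (hALG k hk.2 i t htm.2).symm
        _ ≤ ∑ t ∈ Finset.Icc 1 T, ALG (Pseq Δ ε R0 k) i t := by
            apply Finset.sum_le_sum_of_subset_of_nonneg
            · exact Finset.Icc_subset_Icc le_rfl hk.2
            · intro t _ _; exact hnonneg _ i t
    linarith
  · -- understaffing constraint with d = R0 under P^(T)
    have hcons : ∀ t ≤ T, ∃ dh : ℝ,
        (Pseq Δ ε R0 T t).1 ≤ dh ∧ dh ≤ (Pseq Δ ε R0 T t).2 ∧ |R0 - dh| ≤ ε t := by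
      intro t ht
      refine ⟨R0 - ε t, ?_, ?_, by simp [abs_of_nonneg (hε t), hε t]⟩
      · simp [Pseq, Lsw, ht, hΔ t]
      · simp [Pseq, Rsw, ht]
    have hcst := hcost T (Finset.mem_Icc.mpr ⟨hT, le_rfl⟩) R0 hcons
    set X := ∑ i, ∑ t ∈ Finset.Icc 1 T, ALG (Pseq Δ ε R0 T) i t with hX
    have h1 : c * (R0 - X) ≤ Γ := by
      have hmax : R0 - X ≤ max 0 (R0 - X) := le_max_right _ _
      have h0 : 0 ≤ C * max 0 (X - R0) := mul_nonneg hC.le (le_max_left _ _)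
      nlinarith [mul_le_mul_of_nonneg_left hmax hc.le]
    have : R0 - X ≤ Γ / c := (le_div_iff₀' hc).mpr h1
    linarith
end

section
/- Consider the greedy single-pool algorithm with target overstaffing Γ facing the worst-case sequence L̄_t = R_0 − Δ_t, R̄_t = R_0: it hires x_1 = min(L̄_1 + Γ/C, ρ_1 s) and x_t = min( L̄_t − L̄_{t−1}, ρ_t (s − ∑_{τ<t} x_τ/ρ_τ) ) for t ≥ 2. Let t† be the first time the supply constraint binds (or T). Then the map Γ ↦ Γ̲(Γ) := c·(R_0 − ∑_{τ≤t†} x_τ) is weakly decreasing in Γ on [0, C(ρ_1 s − L̄_1)]. -/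
set_option maxHeartbeats 1000000


/-- monotonicity of the greedy algorithm's worst-case
understaffing cost. Let `x Γ` be the greedy single-pool staffing profile with
target overstaffing cost `Γ`, facing the worst-case sequence `L̄ t = R₀ − Δ t`,
`R̄ t = R₀`: `x Γ 1 = min (L̄ 1 + Γ/C) (ρ 1 · s)` and for `t ≥ 2`
`x Γ t = min (L̄ t − L̄ (t−1)) (ρ t · (s − ∑_{τ < t} x Γ τ / ρ τ))`.
Then `Γ ↦ c·(R₀ − ∑_{τ ≤ t†} x Γ τ)` (which equals `c·(R₀ − ∑_{t=1}^{T} x Γ t)`,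
since no hires occur after the supply constraint binds) is weakly decreasing on
`[0, C·(ρ 1 · s − L̄ 1)]`. -/
theorem greedy_understaffing_antitone
    (T : ℕ) (hT : 1 ≤ T)
    (c C s L0 R0 : ℝ) (hc : 0 < c) (hC : 0 < C) (hs : 0 ≤ s) (hLR : L0 ≤ R0)
    (ρ Δ : ℕ → ℝ)
    (hρpos : ∀ t ∈ Finset.Icc 1 T, 0 < ρ t)
    (hρle : ∀ t ∈ Finset.Icc 1 T, ρ t ≤ 1)
    (hρanti : ∀ t ∈ Finset.Icc 1 T, ∀ t' ∈ Finset.Icc 1 T, t ≤ t' → ρ t' ≤ ρ t)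
    (hΔnonneg : ∀ t ∈ Finset.Icc 1 T, 0 ≤ Δ t)
    (hΔanti : ∀ t ∈ Finset.Icc 1 T, ∀ t' ∈ Finset.Icc 1 T, t ≤ t' → Δ t' ≤ Δ t)
    (hΔle : ∀ t ∈ Finset.Icc 1 T, Δ t ≤ R0 - L0)
    (x : ℝ → ℕ → ℝ)
    (hx1 : ∀ Γ : ℝ, x Γ 1 = min ((R0 - Δ 1) + Γ / C) (ρ 1 * s))
    (hxt : ∀ Γ : ℝ, ∀ t, 2 ≤ t → t ≤ T →
      x Γ t = min ((R0 - Δ t) - (R0 - Δ (t - 1)))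
        (ρ t * (s - ∑ τ ∈ Finset.Icc 1 (t - 1), x Γ τ / ρ τ))) :
    AntitoneOn (fun Γ : ℝ => c * (R0 - ∑ t ∈ Finset.Icc 1 T, x Γ t))
      (Set.Icc 0 (C * (ρ 1 * s - (R0 - Δ 1)))) := by
  intro Γ1 hΓ1 Γ2 hΓ2 h12
  simp only [Set.mem_Icc] at hΓ1 hΓ2
  have hρ1 : 0 < ρ 1 := hρpos 1 (Finset.mem_Icc.mpr ⟨le_refl 1, hT⟩)
  -- day-1 values
  have hx1' : ∀ Γ : ℝ, 0 ≤ Γ → Γ ≤ C * (ρ 1 * s - (R0 - Δ 1)) →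
      x Γ 1 = (R0 - Δ 1) + Γ / C := by
    intro Γ h0 hub
    rw [hx1]
    apply min_eq_left
    have : Γ / C ≤ ρ 1 * s - (R0 - Δ 1) := by
      rw [div_le_iff₀ hC]; nlinarith
    linarith
  -- the key invariant
  have key : ∀ t, 1 ≤ t → t ≤ T →
      (∑ τ ∈ Finset.Icc 1 t, x Γ1 τ / ρ τ ≤ ∑ τ ∈ Finset.Icc 1 t, x Γ2 τ / ρ τ) ∧
      ρ t * ((∑ τ ∈ Finset.Icc 1 t, x Γ2 τ / ρ τ) - ∑ τ ∈ Finset.Icc 1 t, x Γ1 τ / ρ τ)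
        ≤ (∑ τ ∈ Finset.Icc 1 t, x Γ2 τ) - ∑ τ ∈ Finset.Icc 1 t, x Γ1 τ := by
    intro t ht1
    induction t, ht1 using Nat.le_induction with
    | base =>
      intro _
      simp only [Finset.Icc_self, Finset.sum_singleton]
      rw [hx1' Γ1 hΓ1.1 hΓ1.2, hx1' Γ2 hΓ2.1 hΓ2.2]
      have h1 : Γ1 / C ≤ Γ2 / C := by gcongr
      constructor
      · rw [div_le_div_iff₀ hρ1 hρ1]
        nlinarith
      · have h : ρ 1 * (((R0 - Δ 1) + Γ2 / C) / ρ 1 - ((R0 - Δ 1) + Γ1 / C) / ρ 1)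
            = ((R0 - Δ 1) + Γ2 / C) - ((R0 - Δ 1) + Γ1 / C) := by
          field_simp
        rw [h]
    | succ t ht ih =>
      intro hle
      have htT : t ≤ T := le_trans (Nat.le_succ t) hle
      obtain ⟨iAB, iρ⟩ := ih htT
      set A := ∑ τ ∈ Finset.Icc 1 t, x Γ1 τ / ρ τ with hA
      set B := ∑ τ ∈ Finset.Icc 1 t, x Γ2 τ / ρ τ with hB
      set P := ∑ τ ∈ Finset.Icc 1 t, x Γ1 τ with hP
      set Q := ∑ τ ∈ Finset.Icc 1 t, x Γ2 τ with hQ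
      have hmem : t ∈ Finset.Icc 1 T := Finset.mem_Icc.mpr ⟨ht, htT⟩
      have hmem' : t + 1 ∈ Finset.Icc 1 T := Finset.mem_Icc.mpr ⟨by omega, hle⟩
      have hρ' : 0 < ρ (t + 1) := hρpos _ hmem'
      have hρm : ρ (t + 1) ≤ ρ t := hρanti t hmem (t + 1) hmem' (Nat.le_succ t)
      have hd : 0 ≤ (R0 - Δ (t + 1)) - (R0 - Δ t) := by
        have := hΔanti t hmem (t + 1) hmem' (Nat.le_succ t)
        linarith
      set d := (R0 - Δ (t + 1)) - (R0 - Δ t) with hdd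
      have hxa : x Γ1 (t + 1) = min d (ρ (t + 1) * (s - A)) := by
        have h := hxt Γ1 (t + 1) (by omega) hle
        simp only [Nat.add_sub_cancel] at h
        rw [h, hA, hdd]
      have hxb : x Γ2 (t + 1) = min d (ρ (t + 1) * (s - B)) := by
        have h := hxt Γ2 (t + 1) (by omega) hle
        simp only [Nat.add_sub_cancel] at h
        rw [h, hB, hdd]
      set a := min d (ρ (t + 1) * (s - A)) with ha
      set b := min d (ρ (t + 1) * (s - B)) with hb
      have hBA : 0 ≤ B - A := sub_nonneg.mpr iAB
      have hab : a - b ≤ ρ (t + 1) * (B - A) := by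
        have h1 : a ≤ d := min_le_left _ _
        have h2 : a ≤ ρ (t + 1) * (s - A) := min_le_right _ _
        have h3 : a - ρ (t + 1) * (B - A) ≤ b := by
          apply le_min
          · nlinarith
          · nlinarith
        linarith
      have hsumA : ∑ τ ∈ Finset.Icc 1 (t + 1), x Γ1 τ / ρ τ = A + a / ρ (t + 1) := by
        rw [Finset.sum_Icc_succ_top (by omega : 1 ≤ t + 1), hxa]
      have hsumB : ∑ τ ∈ Finset.Icc 1 (t + 1), x Γ2 τ / ρ τ = B + b / ρ (t + 1) := by
        rw [Finset.sum_Icc_succ_top (by omega : 1 ≤ t + 1), hxb]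
      have hsumP : ∑ τ ∈ Finset.Icc 1 (t + 1), x Γ1 τ = P + a := by
        rw [Finset.sum_Icc_succ_top (by omega : 1 ≤ t + 1), hxa]
      have hsumQ : ∑ τ ∈ Finset.Icc 1 (t + 1), x Γ2 τ = Q + b := by
        rw [Finset.sum_Icc_succ_top (by omega : 1 ≤ t + 1), hxb]
      rw [hsumA, hsumB, hsumP, hsumQ]
      have hca : ρ (t + 1) * (a / ρ (t + 1)) = a := by field_simp
      have hcb : ρ (t + 1) * (b / ρ (t + 1)) = b := by field_simp
      constructor
      · have hdiv : (a - b) / ρ (t + 1) ≤ B - A := by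
          rw [div_le_iff₀ hρ', mul_comm]
          exact hab
        have heq : a / ρ (t + 1) - b / ρ (t + 1) = (a - b) / ρ (t + 1) := (sub_div _ _ _).symm
        linarith only [hdiv, heq]
      · have expand : ρ (t + 1) * ((B + b / ρ (t + 1)) - (A + a / ρ (t + 1)))
            = ρ (t + 1) * (B - A) + b - a := by
          have : ρ (t + 1) * ((B + b / ρ (t + 1)) - (A + a / ρ (t + 1)))
              = ρ (t + 1) * (B - A) + ρ (t + 1) * (b / ρ (t + 1))
                - ρ (t + 1) * (a / ρ (t + 1)) := by ring
          rw [this, hca, hcb]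
        rw [expand]
        have hmm : ρ (t + 1) * (B - A) ≤ ρ t * (B - A) :=
          mul_le_mul_of_nonneg_right hρm hBA
        linarith only [hmm, iρ]
  obtain ⟨iAB, iρ⟩ := key T hT le_rfl
  have hρT : 0 < ρ T := hρpos T (Finset.mem_Icc.mpr ⟨hT, le_rfl⟩)
  have hPQ : ∑ t ∈ Finset.Icc 1 T, x Γ1 t ≤ ∑ t ∈ Finset.Icc 1 T, x Γ2 t := by
    have h0 : 0 ≤ ρ T * ((∑ τ ∈ Finset.Icc 1 T, x Γ2 τ / ρ τ)
        - ∑ τ ∈ Finset.Icc 1 T, x Γ1 τ / ρ τ) :=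
      mul_nonneg hρT.le (sub_nonneg.mpr iAB)
    linarith only [h0, iρ]
  simp only
  have h := mul_le_mul_of_nonneg_left (sub_le_sub_left hPQ R0) hc.le
  linarith only [h]
end
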